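/- arXiv:2203.13205 — 7 statements merged into one kernel-verified Lean document; each statement's English description precedes it below -/
import Mathlib

section
/- For every positive integer n, ∑_{i=1}^{2n} C(4n, 2i-1) + ∑_{i=1}^{n-1} C(4n-2, 4i-1) equals 2^(2n-2)·(9·2^(2n-2) + 1) if n is even, and equals 2^(2n-2)·(9·2^(2n-2) - 1) if n is odd. -/
open Finset

lemma im_sum {α : Type*} (s : Finset α) (f : α → GaussianInt) :
    (∑ x ∈ s, f x).im = ∑ x ∈ s, (f x).im := by
  classical
  induction s using Finset.cons_induction with
  | empty => simp
  | cons a s ha ih => rw [Finset.sum_cons, Finset.sum_cons, Zsqrtd.im_add, ih]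

lemma I_pow_mod (k : ℕ) : (Zsqrtd.sqrtd : GaussianInt)^k = Zsqrtd.sqrtd ^ (k % 4) := by
  conv_lhs => rw [← Nat.div_add_mod k 4]
  rw [pow_add, pow_mul]
  norm_num [show (Zsqrtd.sqrtd : GaussianInt)^4 = 1 by simp [pow_succ, Zsqrtd.ext_iff]]

lemma I_pow_im (k : ℕ) : ((Zsqrtd.sqrtd : GaussianInt)^k).im
    = if k % 4 = 1 then 1 else if k % 4 = 3 then -1 else 0 := by
  rw [I_pow_mod]
  have h : k % 4 < 4 := Nat.mod_lt _ (by norm_num)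
  interval_cases h : k % 4 <;> simp [pow_succ, Zsqrtd.ext_iff]

lemma key_im (m : ℕ) :
    ((Zsqrtd.sqrtd + 1 : GaussianInt)^m).im
    = ∑ k ∈ range (m+1),
        (if k % 4 = 1 then ((m.choose k : ℤ)) else if k % 4 = 3 then -(m.choose k) else 0) := by
  rw [add_pow, im_sum]
  refine Finset.sum_congr rfl fun k hk => ?_
  rw [one_pow, mul_one, Zsqrtd.im_mul, I_pow_im]
  simp only [Zsqrtd.im_natCast, Zsqrtd.re_natCast, mul_zero, zero_add]
  split_ifs <;> ring

lemma lhs_im (n : ℕ) (hn : 0 < n) :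
    ((Zsqrtd.sqrtd + 1 : GaussianInt)^(4*n-2)).im
    = (if Even n then -1 else 1) * 2^(2*n-1) := by
  have h1 : (Zsqrtd.sqrtd + 1 : GaussianInt)^2 = 2 * Zsqrtd.sqrtd := by
    simp [pow_two, Zsqrtd.ext_iff]
  have h2 : 4*n-2 = 2*(2*n-1) := by omega
  rw [h2, pow_mul, h1, mul_pow, I_pow_mod]
  have h3 : ((2:GaussianInt)^(2*n-1)) = ((2^(2*n-1) : ℕ) : GaussianInt) := by push_cast; ring
  rw [h3, Zsqrtd.im_mul]
  simp only [Zsqrtd.im_natCast, Zsqrtd.re_natCast, zero_mul, add_zero]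
  rcases Nat.even_or_odd n with he | ho
  · have : (2*n-1) % 4 = 3 := by obtain ⟨t, rfl⟩ := he; omega
    rw [this]
    simp [pow_succ, Zsqrtd.ext_iff, if_pos he]
  · have : (2*n-1) % 4 = 1 := by obtain ⟨t, rfl⟩ := ho; omega
    rw [this]
    rw [if_neg (Nat.not_even_iff_odd.mpr ho)]
    simp [pow_succ, Zsqrtd.ext_iff]

lemma odd_sum_choose (m : ℕ) (hm : 0 < m) :
    ∑ k ∈ (range (m+1)).filter (fun k => k % 2 = 1), m.choose k = 2^(m-1) := by
  set B := ∑ k ∈ (range (m+1)).filter (fun k => k % 2 = 1), m.choose k with hB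
  set A := ∑ k ∈ (range (m+1)).filter (fun k => ¬ k % 2 = 1), m.choose k with hA
  have hAB : B + A = 2^m := by
    rw [hB, hA, Finset.sum_filter_add_sum_filter_not, Nat.sum_range_choose]
  have halt : (A:ℤ) - B = 0 := by
    have h := Int.alternating_sum_range_choose (n := m)
    rw [if_neg hm.ne'] at h
    rw [← Finset.sum_filter_add_sum_filter_not (range (m+1)) (fun k => k % 2 = 1)] at h
    have h1 : ∑ k ∈ (range (m+1)).filter (fun k => k % 2 = 1), (-1:ℤ)^k * m.choose k = -(B:ℤ) := by
      rw [hB, Nat.cast_sum, ← Finset.sum_neg_distrib]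
      refine Finset.sum_congr rfl fun k hk => ?_
      rw [Odd.neg_one_pow (Nat.odd_iff.mpr (Finset.mem_filter.mp hk).2)]; ring
    have h2 : ∑ k ∈ (range (m+1)).filter (fun k => ¬ k % 2 = 1), (-1:ℤ)^k * m.choose k = (A:ℤ) := by
      rw [hA, Nat.cast_sum]
      refine Finset.sum_congr rfl fun k hk => ?_
      rw [Even.neg_one_pow (Nat.even_iff.mpr (by have := (Finset.mem_filter.mp hk).2; omega))]; ring
    rw [h1, h2] at h
    omega
  have h2m : 2^m = 2*2^(m-1) := by
    rw [← pow_succ']; congr 1; omega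
  omega

lemma reindex1 (n : ℕ) :
    ∑ i ∈ Icc 1 (2*n), Nat.choose (4*n) (2*i-1)
      = ∑ k ∈ (range (4*n+1)).filter (fun k => k % 2 = 1), Nat.choose (4*n) k := by
  refine Finset.sum_nbij' (fun i => 2*i-1) (fun k => (k+1)/2) ?_ ?_ ?_ ?_ ?_ <;>
      intro a ha <;>
      simp only [Finset.mem_Icc, Finset.mem_filter, Finset.mem_range] at ha ⊢ <;>
      first | omega | (congr 1; omega)

lemma reindex2 (n : ℕ) :
    ∑ i ∈ Icc 1 (n-1), Nat.choose (4*n-2) (4*i-1)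
      = ∑ k ∈ (range (4*n-1)).filter (fun k => k % 4 = 3), Nat.choose (4*n-2) k := by
  refine Finset.sum_nbij' (fun i => 4*i-1) (fun k => (k+1)/4) ?_ ?_ ?_ ?_ ?_ <;>
      intro a ha <;>
      simp only [Finset.mem_Icc, Finset.mem_filter, Finset.mem_range] at ha ⊢ <;>
      first | omega | (congr 1; omega)

theorem pattern3_pascal (n : ℕ) (hn : 0 < n) :
    (∑ i ∈ Finset.Icc 1 (2 * n), Nat.choose (4 * n) (2 * i - 1)) +
      (∑ i ∈ Finset.Icc 1 (n - 1), Nat.choose (4 * n - 2) (4 * i - 1)) =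
    if Even n then 2 ^ (2 * n - 2) * (9 * 2 ^ (2 * n - 2) + 1)
    else 2 ^ (2 * n - 2) * (9 * 2 ^ (2 * n - 2) - 1) := by
  have hN : 4*n-2+1 = 4*n-1 := by omega
  have hfirst : (∑ i ∈ Icc 1 (2*n), Nat.choose (4*n) (2*i-1)) = 2^(4*n-1) := by
    rw [reindex1, odd_sum_choose (4*n) (by omega)]
  set S1 := ∑ k ∈ (range (4*n-1)).filter (fun k => k % 4 = 1), (4*n-2).choose k with hS1
  set S3 := ∑ k ∈ (range (4*n-1)).filter (fun k => k % 4 = 3), (4*n-2).choose k with hS3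
  have hsecond : (∑ i ∈ Icc 1 (n-1), Nat.choose (4*n-2) (4*i-1)) = S3 := reindex2 n
  -- sum of S1 and S3
  have hu : (range (4*n-1)).filter (fun k => k % 2 = 1)
      = (range (4*n-1)).filter (fun k => k % 4 = 1) ∪ (range (4*n-1)).filter (fun k => k % 4 = 3) := by
    ext k
    simp only [Finset.mem_filter, Finset.mem_union, Finset.mem_range]
    omega
  have hdisj : Disjoint ((range (4*n-1)).filter (fun k => k % 4 = 1))
      ((range (4*n-1)).filter (fun k => k % 4 = 3)) := by
    rw [Finset.disjoint_left]
    intro a ha hb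
    simp only [Finset.mem_filter] at ha hb
    omega
  have E2 : S1 + S3 = 2^(4*n-3) := by
    have h := odd_sum_choose (4*n-2) (by omega)
    rw [hN] at h
    rw [hu, Finset.sum_union hdisj] at h
    have h2 : 4*n-2-1 = 4*n-3 := by omega
    rw [hS1, hS3, h, h2]
  -- difference
  have E1 : (S1:ℤ) - S3 = (if Even n then -1 else 1) * 2^(2*n-1) := by
    have hk := key_im (4*n-2)
    rw [lhs_im n hn] at hk
    rw [hN] at hk
    have hcong : ∀ k ∈ range (4*n-1),
        (if k % 4 = 1 then (((4*n-2).choose k : ℤ)) else if k % 4 = 3 then -((4*n-2).choose k) else 0)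
        = (if k % 4 = 1 then (((4*n-2).choose k : ℤ)) else 0)
          - (if k % 4 = 3 then (((4*n-2).choose k : ℤ)) else 0) := by
      intro k _
      split_ifs <;> first | ring1 | (exfalso; omega)
    rw [Finset.sum_congr rfl hcong, Finset.sum_sub_distrib, ← Finset.sum_filter, ← Finset.sum_filter] at hk
    rw [hS1, hS3]
    push_cast
    rw [← hk]
  -- power rewrites
  have h8 : 2^(4*n-1) = 8*(2^(2*n-2)*2^(2*n-2)) := by
    rw [show 4*n-1 = 3+((2*n-2)+(2*n-2)) by omega, pow_add, pow_add]; norm_num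
  have hb : 2^(4*n-3) = 2*(2^(2*n-2)*2^(2*n-2)) := by
    rw [show 4*n-3 = 1+((2*n-2)+(2*n-2)) by omega, pow_add, pow_add, pow_one]
  have h2a : 2^(2*n-1) = 2*2^(2*n-2) := by
    rw [show 2*n-1 = 1+(2*n-2) by omega, pow_add, pow_one]
  rw [hfirst, hsecond, h8]
  rw [hb] at E2
  set A := 2^(2*n-2) with hA
  set B := A*A with hBdef
  have hA1 : 1 ≤ A := Nat.one_le_two_pow
  have h2aZ : ((2:ℤ))^(2*n-1) = 2*(A:ℤ) := by
    rw [hA]; push_cast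
    rw [show 2*n-1 = 1+(2*n-2) by omega, pow_add, pow_one]
  rw [h2aZ] at E1
  by_cases he : Even n
  · rw [if_pos he] at E1 ⊢
    have hG : A*(9*A+1) = 9*B+A := by rw [hBdef]; ring
    rw [hG]
    omega
  · rw [if_neg he] at E1 ⊢
    have hG : A*(9*A-1) = 9*B-A := by rw [hBdef, Nat.mul_sub, mul_one, show A*(9*A) = 9*(A*A) by ring]
    rw [hG]
    omega
end

section
/- For every positive integer n ≥ 2, ∑_{i=1}^{n-1} C(4n-2, 4i-1) equals 2^(2n-2)·(2^(2n-2) + 1) if n is even, and equals 2^(2n-2)·(2^(2n-2) - 1) if n is odd. -/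
open Finset

lemma pair_sum {M : Type*} [AddCommMonoid M] (f : ℕ → M) (N : ℕ) :
    ∑ k ∈ range (2 * N), f k = ∑ j ∈ range N, (f (2 * j) + f (2 * j + 1)) := by
  induction N with
  | zero => simp
  | succ N ih =>
    rw [show 2 * (N + 1) = 2 * N + 1 + 1 by ring, sum_range_succ, sum_range_succ, ih,
      sum_range_succ]
    abel

noncomputable abbrev zi : ℤ√(-1) := Zsqrtd.sqrtd

lemma zi_sq : zi ^ 2 = -1 := by
  ext <;> simp [zi, pow_two, Zsqrtd.re_mul, Zsqrtd.im_mul]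

lemma zi_pow_even (j : ℕ) : zi ^ (2 * j) = (((-1 : ℤ) ^ j : ℤ) : ℤ√(-1)) := by
  rw [pow_mul, zi_sq]; push_cast; ring

lemma zi_pow_odd (j : ℕ) : zi ^ (2 * j + 1) = (((-1 : ℤ) ^ j : ℤ) : ℤ√(-1)) * zi := by
  rw [pow_succ, zi_pow_even]

def imHom : ℤ√(-1) →+ ℤ := AddMonoidHom.mk' Zsqrtd.im (fun a b => Zsqrtd.im_add a b)

lemma stepB (N : ℕ) :
    ∑ j ∈ range (2 * N + 3), (-1 : ℤ) ^ j * ((4 * N + 6).choose (2 * j + 1) : ℤ) =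
      2 * (-4) ^ (N + 1) := by
  have key : (zi + 1) ^ (4 * N + 6) = ((2 * (-4 : ℤ) ^ (N + 1) : ℤ) : ℤ√(-1)) * zi := by
    have h1 : (zi + 1) ^ 2 = 2 * zi := by
      rw [add_sq, zi_sq]; ring
    calc (zi + 1) ^ (4 * N + 6) = ((zi + 1) ^ 2) ^ (2 * (N + 1) + 1) := by
          rw [← pow_mul, show 2 * (2 * (N + 1) + 1) = 4 * N + 6 by ring]
      _ = (2 * zi) ^ (2 * (N + 1) + 1) := by rw [h1]
      _ = ((2 * zi) ^ 2) ^ (N + 1) * (2 * zi) := by rw [pow_succ, pow_mul]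
      _ = ((2 * (-4 : ℤ) ^ (N + 1) : ℤ) : ℤ√(-1)) * zi := by
          rw [mul_pow, zi_sq]; push_cast; ring
  have expand : (zi + 1) ^ (4 * N + 6) =
      ∑ k ∈ range (4 * N + 7), zi ^ k * ((4 * N + 6).choose k : ℤ√(-1)) := by
    rw [add_pow]
    simp
  have him : (∑ k ∈ range (4 * N + 7), zi ^ k * ((4 * N + 6).choose k : ℤ√(-1))).im =
      ∑ k ∈ range (4 * N + 7), (zi ^ k * ((4 * N + 6).choose k : ℤ√(-1))).im :=
    map_sum imHom _ _
  have heq : ∑ k ∈ range (4 * N + 7), (zi ^ k * ((4 * N + 6).choose k : ℤ√(-1))).im =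
      2 * (-4) ^ (N + 1) := by
    rw [← him, ← expand, key, Zsqrtd.im_smul]
    simp [zi]
  rw [show 4 * N + 7 = 2 * (2 * N + 3) + 1 by ring, sum_range_succ] at heq
  rw [pair_sum] at heq
  have e1 : (zi ^ (2 * (2 * N + 3)) *
      (((4 * N + 6).choose (2 * (2 * N + 3))) : ℤ√(-1))).im = 0 := by
    rw [zi_pow_even, Zsqrtd.im_smul]
    simp
  rw [e1, add_zero] at heq
  rw [← heq]
  apply sum_congr rfl
  intro j _
  simp only [zi_pow_even, zi_pow_odd, mul_assoc, Zsqrtd.im_smul, Zsqrtd.im_mul,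
    Zsqrtd.im_natCast, Zsqrtd.re_natCast, Zsqrtd.im_intCast, Zsqrtd.re_intCast,
    zi, Zsqrtd.re_sqrtd, Zsqrtd.im_sqrtd]
  ring

lemma stepA (N : ℕ) :
    ∑ j ∈ range (2 * N + 3), ((4 * N + 6).choose (2 * j + 1) : ℤ) = 2 ^ (4 * N + 5) := by
  have hT : ∑ k ∈ range (4 * N + 7), ((4 * N + 6).choose k : ℤ) = 2 ^ (4 * N + 6) := by
    have := Nat.sum_range_choose (4 * N + 6)
    exact_mod_cast congrArg (Nat.cast : ℕ → ℤ) this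
  have hAlt : ∑ k ∈ range (4 * N + 7), (-1 : ℤ) ^ k * ((4 * N + 6).choose k : ℤ) = 0 :=
    Int.alternating_sum_range_choose_of_ne (by omega)
  have hsub : ∑ k ∈ range (4 * N + 7),
      (((4 * N + 6).choose k : ℤ) - (-1 : ℤ) ^ k * ((4 * N + 6).choose k)) = 2 ^ (4 * N + 6) := by
    rw [sum_sub_distrib, hT, hAlt, sub_zero]
  rw [show 4 * N + 7 = 2 * (2 * N + 3) + 1 by ring, sum_range_succ, pair_sum] at hsub
  have e1 : (((4 * N + 6).choose (2 * (2 * N + 3)) : ℤ) -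
      (-1 : ℤ) ^ (2 * (2 * N + 3)) * ((4 * N + 6).choose (2 * (2 * N + 3)))) = 0 := by
    simp [pow_mul]
  rw [e1, add_zero] at hsub
  have e2 : ∀ j ∈ range (2 * N + 3),
      ((((4 * N + 6).choose (2 * j) : ℤ) - (-1 : ℤ) ^ (2 * j) * ((4 * N + 6).choose (2 * j))) +
       (((4 * N + 6).choose (2 * j + 1) : ℤ) -
         (-1 : ℤ) ^ (2 * j + 1) * ((4 * N + 6).choose (2 * j + 1)))) =
      2 * ((4 * N + 6).choose (2 * j + 1) : ℤ) := by
    intro j _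
    have hpow : (-1 : ℤ) ^ (2 * j) = 1 := by rw [pow_mul]; norm_num
    rw [pow_succ, hpow]; ring
  rw [sum_congr rfl e2, ← mul_sum] at hsub
  have h2 : (2 : ℤ) ^ (4 * N + 6) = 2 * 2 ^ (4 * N + 5) := by ring
  linarith

lemma aux (N : ℕ) :
    ∑ i ∈ range (N + 1), (((4 * N + 6).choose (4 * i + 3)) : ℤ) =
      2 ^ (4 * N + 4) - (-4) ^ (N + 1) := by
  have hA := stepA N
  have hB := stepB N
  have split : ∀ g : ℕ → ℤ, ∑ j ∈ range (2 * N + 3), g j =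
      ∑ i ∈ range (N + 1), (g (2 * i) + g (2 * i + 1)) + g (2 * (N + 1)) := by
    intro g
    rw [show 2 * N + 3 = 2 * (N + 1) + 1 by ring, sum_range_succ, pair_sum]
  rw [split] at hA hB
  have hsgn : ∀ i : ℕ, (-1 : ℤ) ^ (2 * i) = 1 := fun i => by rw [pow_mul]; norm_num
  have hsgn' : ∀ i : ℕ, (-1 : ℤ) ^ (2 * i + 1) = -1 := fun i => by rw [pow_succ, hsgn]; ring
  simp only [hsgn, hsgn', one_mul, neg_one_mul] at hB
  have e1 : ∀ i : ℕ, 2 * (2 * i) + 1 = 4 * i + 1 := fun i => by ring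
  have e2 : ∀ i : ℕ, 2 * (2 * i + 1) + 1 = 4 * i + 3 := fun i => by ring
  have e3 : 2 * (2 * (N + 1)) + 1 = 4 * N + 5 := by ring
  simp only [e1, e2, e3] at hA hB
  rw [sum_add_distrib] at hA hB
  rw [sum_neg_distrib] at hB
  have hp : (-4 : ℤ) ^ (N + 1) = (-4) ^ N * (-4) := pow_succ _ _
  have h2 : (2 : ℤ) ^ (4 * N + 5) = 2 * 2 ^ (4 * N + 4) := by ring
  linarith

theorem pattern3_key_identity (n : ℕ) (hn : 2 ≤ n) :
    (∑ i ∈ Finset.Icc 1 (n - 1), Nat.choose (4 * n - 2) (4 * i - 1)) =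
    if Even n then 2 ^ (2 * n - 2) * (2 ^ (2 * n - 2) + 1)
    else 2 ^ (2 * n - 2) * (2 ^ (2 * n - 2) - 1) := by
  obtain ⟨N, rfl⟩ : ∃ N, n = N + 2 := ⟨n - 2, by omega⟩
  have hIcc : Finset.Icc 1 (N + 2 - 1) = Finset.Ico 1 (N + 2) := by
    rw [show N + 2 - 1 = N + 1 from rfl, ← Finset.Ico_add_one_right_eq_Icc]
    rfl
  have hsum : (∑ i ∈ Finset.Icc 1 (N + 2 - 1), Nat.choose (4 * (N + 2) - 2) (4 * i - 1)) =
      ∑ i ∈ range (N + 1), Nat.choose (4 * N + 6) (4 * i + 3) := by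
    rw [hIcc, Finset.sum_Ico_eq_sum_range]
    apply sum_congr (by congr 1)
    intro i _
    congr 1 <;> omega
  rw [hsum]
  have hexp : 2 * (N + 2) - 2 = 2 * N + 2 := by omega
  rw [hexp]
  have hparity : Even (N + 2) ↔ Even N := by
    rw [Nat.even_add]; simp
  rcases Nat.even_or_odd N with hN | hN
  · rw [if_pos (hparity.mpr hN)]
    have h4 : ((-4) : ℤ) ^ (N + 1) = -(2 ^ (2 * N + 2)) := by
      rw [show ((-4) : ℤ) = -(2 ^ 2) by norm_num, neg_pow,
        Odd.neg_one_pow (Even.add_one hN), ← pow_mul]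
      ring_nf
    zify
    rw [aux N, h4]; ring
  · rw [if_neg (fun h => (Nat.not_odd_iff_even.mpr (hparity.mp h)) hN)]
    have h4 : ((-4) : ℤ) ^ (N + 1) = 2 ^ (2 * N + 2) := by
      rw [show ((-4) : ℤ) = -(2 ^ 2) by norm_num, neg_pow,
        Even.neg_one_pow (Odd.add_one hN), one_mul, ← pow_mul]
      ring_nf
    have h1 : (1 : ℕ) ≤ 2 ^ (2 * N + 2) := Nat.one_le_two_pow
    zify [h1]
    rw [aux N, h4]
    ring
end

section
/- For every integer n ≥ 1, the sum S(n) = ∑_{i=0}^{n-1} [ C(6n, 6i+1) + C(6n, 6i+5) + C(6n-2, 6i+1) + C(6n-2, 6i+3) ] satisfies S(n) ≡ 20 (mod 42). -/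
/-- Sum of binomial coefficients `C(N, j)` over `j ≡ r (mod 6)`. -/
def psum (N r : ℕ) : ℕ := ∑ i ∈ Finset.range (N + 1), Nat.choose N (6 * i + r)

lemma psum_eq_sum_range (N r M : ℕ) (h : N < 6 * M + r) :
    ∑ i ∈ Finset.range M, Nat.choose N (6 * i + r) = psum N r := by
  have key : ∀ K L : ℕ, K ≤ L → (∀ i, K ≤ i → Nat.choose N (6 * i + r) = 0) →
      ∑ i ∈ Finset.range L, Nat.choose N (6 * i + r)
        = ∑ i ∈ Finset.range K, Nat.choose N (6 * i + r) := by
    intro K L hKL hz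
    exact (Finset.sum_subset (Finset.range_subset_range.2 hKL)
      (fun x _ hx => hz x (by simpa using hx))).symm
  have hM : ∀ i, M ≤ i → Nat.choose N (6 * i + r) = 0 := fun i hi =>
    Nat.choose_eq_zero_of_lt (by omega)
  have hN : ∀ i, N + 1 ≤ i → Nat.choose N (6 * i + r) = 0 := fun i hi =>
    Nat.choose_eq_zero_of_lt (by omega)
  rw [← key M (M + (N + 1)) (by omega) hM]
  unfold psum
  rw [← key (N + 1) (M + (N + 1)) (by omega) hN]

lemma psum_succ_succ (N r : ℕ) :
    psum (N + 1) (r + 1) = psum N r + psum N (r + 1) := by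
  unfold psum
  have : ∀ i ∈ Finset.range (N + 2),
      Nat.choose (N + 1) (6 * i + (r + 1))
        = Nat.choose N (6 * i + r) + Nat.choose N (6 * i + (r + 1)) := by
    intro i _
    exact Nat.choose_succ_succ' N (6 * i + r)
  rw [Finset.sum_congr rfl this, Finset.sum_add_distrib]
  congr 1
  · exact psum_eq_sum_range N r (N + 2) (by omega)
  · exact psum_eq_sum_range N (r + 1) (N + 2) (by omega)

lemma psum_succ_zero (N : ℕ) : psum (N + 1) 0 = psum N 0 + psum N 5 := by
  unfold psum
  rw [Finset.sum_range_succ' (fun i => Nat.choose (N + 1) (6 * i + 0)) (N + 1)]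
  have h1 : ∀ i ∈ Finset.range (N + 1),
      Nat.choose (N + 1) (6 * (i + 1) + 0)
        = Nat.choose N (6 * i + 5) + Nat.choose N (6 * i + 6) := by
    intro i _
    have e : 6 * (i + 1) + 0 = (6 * i + 5) + 1 := by ring
    rw [e]
    exact Nat.choose_succ_succ' N (6 * i + 5)
  rw [Finset.sum_congr rfl h1, Finset.sum_add_distrib]
  have h2 : ∑ i ∈ Finset.range (N + 1), Nat.choose N (6 * i + 6)
      = ∑ i ∈ Finset.range (N + 1), Nat.choose N (6 * (i + 1) + 0) := by
    exact Finset.sum_congr rfl fun i _ =>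
      congrArg (Nat.choose N) (by ring : 6 * i + 6 = 6 * (i + 1) + 0)
  have h3 : ∑ i ∈ Finset.range (N + 1), Nat.choose N (6 * i + 0)
      = ∑ i ∈ Finset.range N, Nat.choose N (6 * (i + 1) + 0) + Nat.choose N 0 := by
    rw [← Finset.sum_range_succ' (fun i => Nat.choose N (6 * i + 0)) N]
  have h4 : ∑ i ∈ Finset.range (N + 1), Nat.choose N (6 * (i + 1) + 0)
      = ∑ i ∈ Finset.range N, Nat.choose N (6 * (i + 1) + 0) := by
    rw [Finset.sum_range_succ]
    have : Nat.choose N (6 * (N + 1) + 0) = 0 := Nat.choose_eq_zero_of_lt (by omega)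
    omega
  rw [h2, h4, h3]
  simp [Nat.choose_zero_right]
  omega

/-- One step of the mod-42 vector recurrence. -/
lemma psum_step (N a0 a1 a2 a3 a4 a5 : ℕ)
    (h0 : psum N 0 % 42 = a0) (h1 : psum N 1 % 42 = a1) (h2 : psum N 2 % 42 = a2)
    (h3 : psum N 3 % 42 = a3) (h4 : psum N 4 % 42 = a4) (h5 : psum N 5 % 42 = a5) :
    psum (N + 1) 0 % 42 = (a0 + a5) % 42 ∧ psum (N + 1) 1 % 42 = (a0 + a1) % 42 ∧
    psum (N + 1) 2 % 42 = (a1 + a2) % 42 ∧ psum (N + 1) 3 % 42 = (a2 + a3) % 42 ∧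
    psum (N + 1) 4 % 42 = (a3 + a4) % 42 ∧ psum (N + 1) 5 % 42 = (a4 + a5) % 42 := by
  refine ⟨?_, ?_, ?_, ?_, ?_, ?_⟩
  · rw [psum_succ_zero, Nat.add_mod, h0, h5, Nat.add_mod a0 a5]
  · rw [show (1 : ℕ) = 0 + 1 from rfl, psum_succ_succ, Nat.add_mod, h0, h1, Nat.add_mod a0 a1]
  · rw [show (2 : ℕ) = 1 + 1 from rfl, psum_succ_succ, Nat.add_mod, h1, h2, Nat.add_mod a1 a2]
  · rw [show (3 : ℕ) = 2 + 1 from rfl, psum_succ_succ, Nat.add_mod, h2, h3, Nat.add_mod a2 a3]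
  · rw [show (4 : ℕ) = 3 + 1 from rfl, psum_succ_succ, Nat.add_mod, h3, h4, Nat.add_mod a3 a4]
  · rw [show (5 : ℕ) = 4 + 1 from rfl, psum_succ_succ, Nat.add_mod, h4, h5, Nat.add_mod a4 a5]

lemma psum_vec (m : ℕ) :
    (psum (6 * m + 4) 0 % 42 = 1 ∧ psum (6 * m + 4) 1 % 42 = 4 ∧
     psum (6 * m + 4) 2 % 42 = 6 ∧ psum (6 * m + 4) 3 % 42 = 4 ∧
     psum (6 * m + 4) 4 % 42 = 1 ∧ psum (6 * m + 4) 5 % 42 = 0) ∧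
    (psum (6 * m + 6) 0 % 42 = 2 ∧ psum (6 * m + 6) 1 % 42 = 6 ∧
     psum (6 * m + 6) 2 % 42 = 15 ∧ psum (6 * m + 6) 3 % 42 = 20 ∧
     psum (6 * m + 6) 4 % 42 = 15 ∧ psum (6 * m + 6) 5 % 42 = 6) := by
  induction m with
  | zero =>
      constructor <;> refine ⟨?_, ?_, ?_, ?_, ?_, ?_⟩ <;> decide
  | succ m ih =>
      obtain ⟨-, hA0, hA1, hA2, hA3, hA4, hA5⟩ := ih
      obtain ⟨g0, g1, g2, g3, g4, g5⟩ :=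
        psum_step (6 * m + 6) 2 6 15 20 15 6 hA0 hA1 hA2 hA3 hA4 hA5
      norm_num at g0 g1 g2 g3 g4 g5
      obtain ⟨g0, g1, g2, g3, g4, g5⟩ :=
        psum_step (6 * m + 6 + 1) 8 8 21 35 35 21 g0 g1 g2 g3 g4 g5
      norm_num at g0 g1 g2 g3 g4 g5
      obtain ⟨g0, g1, g2, g3, g4, g5⟩ :=
        psum_step (6 * m + 6 + 1 + 1) 29 16 29 14 28 14 g0 g1 g2 g3 g4 g5
      norm_num at g0 g1 g2 g3 g4 g5
      obtain ⟨g0, g1, g2, g3, g4, g5⟩ :=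
        psum_step (6 * m + 6 + 1 + 1 + 1) 1 3 3 1 0 0 g0 g1 g2 g3 g4 g5
      norm_num at g0 g1 g2 g3 g4 g5
      obtain ⟨f0, f1, f2, f3, f4, f5⟩ :=
        psum_step (6 * m + 6 + 1 + 1 + 1 + 1) 1 4 6 4 1 0 g0 g1 g2 g3 g4 g5
      norm_num at f0 f1 f2 f3 f4 f5
      obtain ⟨e0, e1, e2, e3, e4, e5⟩ :=
        psum_step (6 * m + 6 + 1 + 1 + 1 + 1 + 1) 1 5 10 10 5 1 f0 f1 f2 f3 f4 f5
      norm_num at e0 e1 e2 e3 e4 e5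
      have eB : 6 * (m + 1) + 4 = 6 * m + 6 + 1 + 1 + 1 + 1 := by ring
      have eA : 6 * (m + 1) + 6 = 6 * m + 6 + 1 + 1 + 1 + 1 + 1 + 1 := by ring
      rw [eB, eA]
      exact ⟨⟨g0, g1, g2, g3, g4, g5⟩, e0, e1, e2, e3, e4, e5⟩

theorem pattern4_pascal_mod42 (n : ℕ) (hn : 1 ≤ n) :
    (∑ i ∈ Finset.range n,
        (Nat.choose (6 * n) (6 * i + 1) + Nat.choose (6 * n) (6 * i + 5) +
          Nat.choose (6 * n - 2) (6 * i + 1) + Nat.choose (6 * n - 2) (6 * i + 3)))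
      % 42 = 20 := by
  obtain ⟨m, rfl⟩ : ∃ m, n = m + 1 := ⟨n - 1, by omega⟩
  have e1 : 6 * (m + 1) = 6 * m + 6 := by ring
  have e2 : 6 * m + 6 - 2 = 6 * m + 4 := by omega
  rw [e1, e2]
  have hsplit :
      (∑ i ∈ Finset.range (m + 1),
        (Nat.choose (6 * m + 6) (6 * i + 1) + Nat.choose (6 * m + 6) (6 * i + 5) +
          Nat.choose (6 * m + 4) (6 * i + 1) + Nat.choose (6 * m + 4) (6 * i + 3)))
      = (∑ i ∈ Finset.range (m + 1), Nat.choose (6 * m + 6) (6 * i + 1)) +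
        (∑ i ∈ Finset.range (m + 1), Nat.choose (6 * m + 6) (6 * i + 5)) +
        (∑ i ∈ Finset.range (m + 1), Nat.choose (6 * m + 4) (6 * i + 1)) +
        (∑ i ∈ Finset.range (m + 1), Nat.choose (6 * m + 4) (6 * i + 3)) := by
    simp [Finset.sum_add_distrib]
  rw [hsplit,
    psum_eq_sum_range (6 * m + 6) 1 (m + 1) (by omega),
    psum_eq_sum_range (6 * m + 6) 5 (m + 1) (by omega),
    psum_eq_sum_range (6 * m + 4) 1 (m + 1) (by omega),
    psum_eq_sum_range (6 * m + 4) 3 (m + 1) (by omega)]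
  obtain ⟨⟨-, hb1, -, hb3, -, -⟩, ⟨-, ha1, -, -, -, ha5⟩⟩ := psum_vec m
  omega
end

section
/- For every integer n ≥ 1, the sum S(n) = ∑_{i=0}^{n-1} [ C(6n, 6i+1) + C(6n, 6i+5) + C(6n-2, 6i+1) + C(6n-2, 6i+3) ] satisfies the three congruences S(n) ≡ 0 (mod 2), S(n) ≡ 2 (mod 3), and S(n) ≡ 6 (mod 7). -/
def g (N j : ℕ) : ℕ := ∑ k ∈ Finset.range (N + 1), if k % 6 = j then Nat.choose N k else 0

lemma pascal' (N j j' : ℕ) (hj : j < 6) (hj' : j' < 6) (h : (j' + 1) % 6 = j) :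
    g (N + 1) j = g N j + g N j' := by
  unfold g
  rw [Finset.sum_range_succ' (fun k => if k % 6 = j then Nat.choose (N + 1) k else 0) (N + 1)]
  have e1 : ∀ k, (if (k + 1) % 6 = j then Nat.choose (N + 1) (k + 1) else 0)
      = (if (k + 1) % 6 = j then Nat.choose N (k + 1) else 0)
        + (if k % 6 = j' then Nat.choose N k else 0) := by
    intro k
    have hk : (k + 1) % 6 = j ↔ k % 6 = j' := by omega
    rw [Nat.choose_succ_succ]
    by_cases hc : (k + 1) % 6 = j
    · rw [if_pos hc, if_pos hc, if_pos (hk.mp hc)]; ring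
    · rw [if_neg hc, if_neg hc, if_neg (fun hcc => hc (hk.mpr hcc))]
  rw [Finset.sum_congr rfl (fun k _ => e1 k), Finset.sum_add_distrib]
  have e2 := Finset.sum_range_succ' (fun k => if k % 6 = j then Nat.choose N k else 0) (N + 1)
  have e3 := Finset.sum_range_succ (fun k => if k % 6 = j then Nat.choose N k else 0) (N + 1)
  have e4 : Nat.choose N (N + 1) = 0 := Nat.choose_eq_zero_of_lt (by omega)
  simp only [e4, ite_self] at e3
  have e5 : Nat.choose (N + 1) 0 = Nat.choose N 0 := by simp
  beta_reduce at e2 e3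
  simp only [e5]
  omega

lemma rowstep {N a0 a1 a2 a3 a4 a5 : ℕ}
    (h0 : g N 0 % 42 = a0) (h1 : g N 1 % 42 = a1) (h2 : g N 2 % 42 = a2)
    (h3 : g N 3 % 42 = a3) (h4 : g N 4 % 42 = a4) (h5 : g N 5 % 42 = a5) :
    g (N + 1) 0 % 42 = (a0 + a5) % 42 ∧ g (N + 1) 1 % 42 = (a1 + a0) % 42 ∧
    g (N + 1) 2 % 42 = (a2 + a1) % 42 ∧ g (N + 1) 3 % 42 = (a3 + a2) % 42 ∧
    g (N + 1) 4 % 42 = (a4 + a3) % 42 ∧ g (N + 1) 5 % 42 = (a5 + a4) % 42 := by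
  have p0 := pascal' N 0 5 (by norm_num) (by norm_num) (by norm_num)
  have p1 := pascal' N 1 0 (by norm_num) (by norm_num) (by norm_num)
  have p2 := pascal' N 2 1 (by norm_num) (by norm_num) (by norm_num)
  have p3 := pascal' N 3 2 (by norm_num) (by norm_num) (by norm_num)
  have p4 := pascal' N 4 3 (by norm_num) (by norm_num) (by norm_num)
  have p5 := pascal' N 5 4 (by norm_num) (by norm_num) (by norm_num)
  exact ⟨by omega, by omega, by omega, by omega, by omega, by omega⟩

lemma key6 {N : ℕ}
    (h0 : g N 0 % 42 = 2) (h1 : g N 1 % 42 = 6) (h2 : g N 2 % 42 = 15)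
    (h3 : g N 3 % 42 = 20) (h4 : g N 4 % 42 = 15) (h5 : g N 5 % 42 = 6) :
    g (N + 6) 0 % 42 = 2 ∧ g (N + 6) 1 % 42 = 6 ∧ g (N + 6) 2 % 42 = 15 ∧
    g (N + 6) 3 % 42 = 20 ∧ g (N + 6) 4 % 42 = 15 ∧ g (N + 6) 5 % 42 = 6 := by
  obtain ⟨k0, k1, k2, k3, k4, k5⟩ := rowstep h0 h1 h2 h3 h4 h5
  have h0 : g (N + 1) 0 % 42 = 8 := by omega
  have h1 : g (N + 1) 1 % 42 = 8 := by omega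
  have h2 : g (N + 1) 2 % 42 = 21 := by omega
  have h3 : g (N + 1) 3 % 42 = 35 := by omega
  have h4 : g (N + 1) 4 % 42 = 35 := by omega
  have h5 : g (N + 1) 5 % 42 = 21 := by omega
  clear k0
  clear k1
  clear k2
  clear k3
  clear k4
  clear k5
  obtain ⟨k0, k1, k2, k3, k4, k5⟩ := rowstep h0 h1 h2 h3 h4 h5
  have h0 : g (N + 2) 0 % 42 = 29 := by rw [show N + 2 = N + 1 + 1 by omega]; omega
  have h1 : g (N + 2) 1 % 42 = 16 := by rw [show N + 2 = N + 1 + 1 by omega]; omega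
  have h2 : g (N + 2) 2 % 42 = 29 := by rw [show N + 2 = N + 1 + 1 by omega]; omega
  have h3 : g (N + 2) 3 % 42 = 14 := by rw [show N + 2 = N + 1 + 1 by omega]; omega
  have h4 : g (N + 2) 4 % 42 = 28 := by rw [show N + 2 = N + 1 + 1 by omega]; omega
  have h5 : g (N + 2) 5 % 42 = 14 := by rw [show N + 2 = N + 1 + 1 by omega]; omega
  clear k0
  clear k1
  clear k2
  clear k3
  clear k4
  clear k5
  obtain ⟨k0, k1, k2, k3, k4, k5⟩ := rowstep h0 h1 h2 h3 h4 h5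
  have h0 : g (N + 3) 0 % 42 = 1 := by rw [show N + 3 = N + 2 + 1 by omega]; omega
  have h1 : g (N + 3) 1 % 42 = 3 := by rw [show N + 3 = N + 2 + 1 by omega]; omega
  have h2 : g (N + 3) 2 % 42 = 3 := by rw [show N + 3 = N + 2 + 1 by omega]; omega
  have h3 : g (N + 3) 3 % 42 = 1 := by rw [show N + 3 = N + 2 + 1 by omega]; omega
  have h4 : g (N + 3) 4 % 42 = 0 := by rw [show N + 3 = N + 2 + 1 by omega]; omega
  have h5 : g (N + 3) 5 % 42 = 0 := by rw [show N + 3 = N + 2 + 1 by omega]; omega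
  clear k0
  clear k1
  clear k2
  clear k3
  clear k4
  clear k5
  obtain ⟨k0, k1, k2, k3, k4, k5⟩ := rowstep h0 h1 h2 h3 h4 h5
  have h0 : g (N + 4) 0 % 42 = 1 := by rw [show N + 4 = N + 3 + 1 by omega]; omega
  have h1 : g (N + 4) 1 % 42 = 4 := by rw [show N + 4 = N + 3 + 1 by omega]; omega
  have h2 : g (N + 4) 2 % 42 = 6 := by rw [show N + 4 = N + 3 + 1 by omega]; omega
  have h3 : g (N + 4) 3 % 42 = 4 := by rw [show N + 4 = N + 3 + 1 by omega]; omega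
  have h4 : g (N + 4) 4 % 42 = 1 := by rw [show N + 4 = N + 3 + 1 by omega]; omega
  have h5 : g (N + 4) 5 % 42 = 0 := by rw [show N + 4 = N + 3 + 1 by omega]; omega
  clear k0
  clear k1
  clear k2
  clear k3
  clear k4
  clear k5
  obtain ⟨k0, k1, k2, k3, k4, k5⟩ := rowstep h0 h1 h2 h3 h4 h5
  have h0 : g (N + 5) 0 % 42 = 1 := by rw [show N + 5 = N + 4 + 1 by omega]; omega
  have h1 : g (N + 5) 1 % 42 = 5 := by rw [show N + 5 = N + 4 + 1 by omega]; omega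
  have h2 : g (N + 5) 2 % 42 = 10 := by rw [show N + 5 = N + 4 + 1 by omega]; omega
  have h3 : g (N + 5) 3 % 42 = 10 := by rw [show N + 5 = N + 4 + 1 by omega]; omega
  have h4 : g (N + 5) 4 % 42 = 5 := by rw [show N + 5 = N + 4 + 1 by omega]; omega
  have h5 : g (N + 5) 5 % 42 = 1 := by rw [show N + 5 = N + 4 + 1 by omega]; omega
  clear k0
  clear k1
  clear k2
  clear k3
  clear k4
  clear k5
  obtain ⟨k0, k1, k2, k3, k4, k5⟩ := rowstep h0 h1 h2 h3 h4 h5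
  have h0 : g (N + 6) 0 % 42 = 2 := by rw [show N + 6 = N + 5 + 1 by omega]; omega
  have h1 : g (N + 6) 1 % 42 = 6 := by rw [show N + 6 = N + 5 + 1 by omega]; omega
  have h2 : g (N + 6) 2 % 42 = 15 := by rw [show N + 6 = N + 5 + 1 by omega]; omega
  have h3 : g (N + 6) 3 % 42 = 20 := by rw [show N + 6 = N + 5 + 1 by omega]; omega
  have h4 : g (N + 6) 4 % 42 = 15 := by rw [show N + 6 = N + 5 + 1 by omega]; omega
  have h5 : g (N + 6) 5 % 42 = 6 := by rw [show N + 6 = N + 5 + 1 by omega]; omega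
  clear k0
  clear k1
  clear k2
  clear k3
  clear k4
  clear k5
  exact ⟨h0, h1, h2, h3, h4, h5⟩

lemma key4 {N : ℕ}
    (h0 : g N 0 % 42 = 2) (h1 : g N 1 % 42 = 6) (h2 : g N 2 % 42 = 15)
    (h3 : g N 3 % 42 = 20) (h4 : g N 4 % 42 = 15) (h5 : g N 5 % 42 = 6) :
    g (N + 4) 1 % 42 = 4 ∧ g (N + 4) 3 % 42 = 4 := by
  obtain ⟨k0, k1, k2, k3, k4, k5⟩ := rowstep h0 h1 h2 h3 h4 h5
  have h0 : g (N + 1) 0 % 42 = 8 := by omega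
  have h1 : g (N + 1) 1 % 42 = 8 := by omega
  have h2 : g (N + 1) 2 % 42 = 21 := by omega
  have h3 : g (N + 1) 3 % 42 = 35 := by omega
  have h4 : g (N + 1) 4 % 42 = 35 := by omega
  have h5 : g (N + 1) 5 % 42 = 21 := by omega
  clear k0
  clear k1
  clear k2
  clear k3
  clear k4
  clear k5
  obtain ⟨k0, k1, k2, k3, k4, k5⟩ := rowstep h0 h1 h2 h3 h4 h5
  have h0 : g (N + 2) 0 % 42 = 29 := by rw [show N + 2 = N + 1 + 1 by omega]; omega
  have h1 : g (N + 2) 1 % 42 = 16 := by rw [show N + 2 = N + 1 + 1 by omega]; omega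
  have h2 : g (N + 2) 2 % 42 = 29 := by rw [show N + 2 = N + 1 + 1 by omega]; omega
  have h3 : g (N + 2) 3 % 42 = 14 := by rw [show N + 2 = N + 1 + 1 by omega]; omega
  have h4 : g (N + 2) 4 % 42 = 28 := by rw [show N + 2 = N + 1 + 1 by omega]; omega
  have h5 : g (N + 2) 5 % 42 = 14 := by rw [show N + 2 = N + 1 + 1 by omega]; omega
  clear k0
  clear k1
  clear k2
  clear k3
  clear k4
  clear k5
  obtain ⟨k0, k1, k2, k3, k4, k5⟩ := rowstep h0 h1 h2 h3 h4 h5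
  have h0 : g (N + 3) 0 % 42 = 1 := by rw [show N + 3 = N + 2 + 1 by omega]; omega
  have h1 : g (N + 3) 1 % 42 = 3 := by rw [show N + 3 = N + 2 + 1 by omega]; omega
  have h2 : g (N + 3) 2 % 42 = 3 := by rw [show N + 3 = N + 2 + 1 by omega]; omega
  have h3 : g (N + 3) 3 % 42 = 1 := by rw [show N + 3 = N + 2 + 1 by omega]; omega
  have h4 : g (N + 3) 4 % 42 = 0 := by rw [show N + 3 = N + 2 + 1 by omega]; omega
  have h5 : g (N + 3) 5 % 42 = 0 := by rw [show N + 3 = N + 2 + 1 by omega]; omega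
  clear k0
  clear k1
  clear k2
  clear k3
  clear k4
  clear k5
  obtain ⟨k0, k1, k2, k3, k4, k5⟩ := rowstep h0 h1 h2 h3 h4 h5
  have h0 : g (N + 4) 0 % 42 = 1 := by rw [show N + 4 = N + 3 + 1 by omega]; omega
  have h1 : g (N + 4) 1 % 42 = 4 := by rw [show N + 4 = N + 3 + 1 by omega]; omega
  have h2 : g (N + 4) 2 % 42 = 6 := by rw [show N + 4 = N + 3 + 1 by omega]; omega
  have h3 : g (N + 4) 3 % 42 = 4 := by rw [show N + 4 = N + 3 + 1 by omega]; omega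
  have h4 : g (N + 4) 4 % 42 = 1 := by rw [show N + 4 = N + 3 + 1 by omega]; omega
  have h5 : g (N + 4) 5 % 42 = 0 := by rw [show N + 4 = N + 3 + 1 by omega]; omega
  clear k0
  clear k1
  clear k2
  clear k3
  clear k4
  clear k5
  exact ⟨h1, h3⟩

lemma rows6 : ∀ n, 1 ≤ n → g (6 * n) 0 % 42 = 2 ∧ g (6 * n) 1 % 42 = 6 ∧
    g (6 * n) 2 % 42 = 15 ∧ g (6 * n) 3 % 42 = 20 ∧ g (6 * n) 4 % 42 = 15 ∧
    g (6 * n) 5 % 42 = 6 := by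
  intro n hn
  induction n with
  | zero => omega
  | succ m ih =>
    rcases Nat.eq_zero_or_pos m with hm | hm
    · subst hm
      refine ⟨by decide, by decide, by decide, by decide, by decide, by decide⟩
    · obtain ⟨h0, h1, h2, h3, h4, h5⟩ := ih hm
      have e : 6 * (m + 1) = 6 * m + 6 := by ring
      rw [e]
      exact key6 h0 h1 h2 h3 h4 h5

lemma rows4 : ∀ m : ℕ, g (6 * m + 4) 1 % 42 = 4 ∧ g (6 * m + 4) 3 % 42 = 4 := by
  intro m
  rcases Nat.eq_zero_or_pos m with hm | hm
  · subst hm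
    exact ⟨by decide, by decide⟩
  · obtain ⟨h0, h1, h2, h3, h4, h5⟩ := rows6 m hm
    exact key4 h0 h1 h2 h3 h4 h5

lemma g_eq_sum (N r n : ℕ) (hr : r < 6) (hN : N + 1 ≤ 6 * n + r) :
    g N r = ∑ i ∈ Finset.range n, Nat.choose N (6 * i + r) := by
  unfold g
  rw [← Finset.sum_filter]
  have himg : ∑ k ∈ (Finset.range n).image (fun i => 6 * i + r), Nat.choose N k
      = ∑ i ∈ Finset.range n, Nat.choose N (6 * i + r) :=
    Finset.sum_image (fun a _ b _ h => by omega)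
  rw [← himg]
  apply Finset.sum_subset
  · intro k hk
    simp only [Finset.mem_filter, Finset.mem_range] at hk
    simp only [Finset.mem_image, Finset.mem_range]
    exact ⟨k / 6, by omega, by omega⟩
  · intro k hk hks
    simp only [Finset.mem_image, Finset.mem_range] at hk
    simp only [Finset.mem_filter, Finset.mem_range] at hks
    obtain ⟨i, hi, rfl⟩ := hk
    exact Nat.choose_eq_zero_of_lt (by omega)


theorem pattern4_pascal_three_congruences (n : ℕ) (hn : 1 ≤ n) :
    (∑ i ∈ Finset.range n,
        (Nat.choose (6 * n) (6 * i + 1) + Nat.choose (6 * n) (6 * i + 5) +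
          Nat.choose (6 * n - 2) (6 * i + 1) + Nat.choose (6 * n - 2) (6 * i + 3)))
      % 2 = 0 ∧
    (∑ i ∈ Finset.range n,
        (Nat.choose (6 * n) (6 * i + 1) + Nat.choose (6 * n) (6 * i + 5) +
          Nat.choose (6 * n - 2) (6 * i + 1) + Nat.choose (6 * n - 2) (6 * i + 3)))
      % 3 = 2 ∧
    (∑ i ∈ Finset.range n,
        (Nat.choose (6 * n) (6 * i + 1) + Nat.choose (6 * n) (6 * i + 5) +
          Nat.choose (6 * n - 2) (6 * i + 1) + Nat.choose (6 * n - 2) (6 * i + 3)))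
      % 7 = 6 := by
  obtain ⟨_, h1, _, _, _, h5⟩ := rows6 n hn
  obtain ⟨hB1, hB3⟩ := rows4 (n - 1)
  rw [show 6 * (n - 1) + 4 = 6 * n - 2 by omega] at hB1 hB3
  have s1 : g (6 * n) 1 = ∑ i ∈ Finset.range n, Nat.choose (6 * n) (6 * i + 1) :=
    g_eq_sum _ 1 n (by norm_num) (by omega)
  have s5 : g (6 * n) 5 = ∑ i ∈ Finset.range n, Nat.choose (6 * n) (6 * i + 5) :=
    g_eq_sum _ 5 n (by norm_num) (by omega)
  have t1 : g (6 * n - 2) 1 = ∑ i ∈ Finset.range n, Nat.choose (6 * n - 2) (6 * i + 1) :=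
    g_eq_sum _ 1 n (by norm_num) (by omega)
  have t3 : g (6 * n - 2) 3 = ∑ i ∈ Finset.range n, Nat.choose (6 * n - 2) (6 * i + 3) :=
    g_eq_sum _ 3 n (by norm_num) (by omega)
  have hsum : (∑ i ∈ Finset.range n,
        (Nat.choose (6 * n) (6 * i + 1) + Nat.choose (6 * n) (6 * i + 5) +
          Nat.choose (6 * n - 2) (6 * i + 1) + Nat.choose (6 * n - 2) (6 * i + 3)))
      = g (6 * n) 1 + g (6 * n) 5 + g (6 * n - 2) 1 + g (6 * n - 2) 3 := by
    rw [Finset.sum_add_distrib, Finset.sum_add_distrib, Finset.sum_add_distrib,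
      s1, s5, t1, t3]
  rw [hsum]
  omega
end

section
/- Let F denote the Fibonacci sequence with F_1 = F_2 = 1. For every odd integer n ≥ 3, 10 · ∑_{k=1}^{(n-1)/2} F_{2k} · F_{n-2k+1} = (4n-8) · F_{n-3} + (7n-11) · F_{n-2}. -/
open Finset Nat

private def A (m : ℕ) : ℕ := ∑ k ∈ Icc 1 m, fib (2*k) * fib (2*m+2-2*k)
private def B (m : ℕ) : ℕ := ∑ k ∈ Icc 1 m, fib (2*k) * fib (2*m+1-2*k)

private lemma recA (m : ℕ) : A (m+1) = B (m+1) + A m := by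
  unfold A B
  have h1 : ∑ k ∈ Icc 1 (m+1), fib (2*k) * fib (2*(m+1)+2-2*k)
      = ∑ k ∈ Icc 1 (m+1), (fib (2*k) * fib (2*(m+1)+1-2*k) + fib (2*k) * fib (2*m+2-2*k)) := by
    apply Finset.sum_congr rfl
    intro k hk
    obtain ⟨h1', h2'⟩ := Finset.mem_Icc.mp hk
    have e1 : 2*(m+1)+2-2*k = (2*m+2-2*k)+2 := by omega
    have e2 : (2*m+2-2*k)+1 = 2*(m+1)+1-2*k := by omega
    rw [e1, Nat.fib_add_two, e2, Nat.mul_add]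
    exact Nat.add_comm _ _
  rw [h1, Finset.sum_add_distrib]
  congr 1
  rw [Finset.sum_Icc_succ_top (by omega : 1 ≤ m+1)]
  have e3 : 2*m+2-2*(m+1) = 0 := by omega
  rw [e3]
  simp

private lemma recB (m : ℕ) : B (m+1) = A m + B m + fib (2*m+2) := by
  unfold A B
  rw [Finset.sum_Icc_succ_top (by omega : 1 ≤ m+1)]
  have e0 : 2*(m+1)+1-2*(m+1) = 1 := by omega
  rw [e0]
  have h1 : ∑ k ∈ Icc 1 m, fib (2*k) * fib (2*(m+1)+1-2*k)
      = ∑ k ∈ Icc 1 m, (fib (2*k) * fib (2*m+2-2*k) + fib (2*k) * fib (2*m+1-2*k)) := by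
    apply Finset.sum_congr rfl
    intro k hk
    obtain ⟨h1', h2'⟩ := Finset.mem_Icc.mp hk
    have e1 : 2*(m+1)+1-2*k = (2*m+1-2*k)+2 := by omega
    have e2 : (2*m+1-2*k)+1 = 2*m+2-2*k := by omega
    rw [e1, Nat.fib_add_two, e2, Nat.mul_add, Nat.add_comm (fib (2*k) * fib (2*m+1-2*k))]
  rw [h1, Finset.sum_add_distrib, show 2*(m+1) = 2*m+2 from by ring]
  simp [Nat.mul_one]

private lemma key (j : ℕ) :
    10 * A (j+1) = (8*j+4) * fib (2*j) + (14*j+10) * fib (2*j+1) ∧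
    10 * B (j+1) = (2*j+2) * fib (2*j+1) + (6*j+8) * fib (2*j+2) := by
  induction j with
  | zero => exact ⟨by unfold A; decide, by unfold B; decide⟩
  | succ j ih =>
    obtain ⟨ihA, ihB⟩ := ih
    have hf2 : fib (2*j+2) = fib (2*j) + fib (2*j+1) := Nat.fib_add_two
    have hf3 : fib (2*j+3) = fib (2*j+1) + fib (2*j+2) := by
      rw [show 2*j+3 = (2*j+1)+2 from by ring, Nat.fib_add_two, show (2*j+1)+1 = 2*j+2 from by ring]
    have hf4 : fib (2*j+4) = fib (2*j+2) + fib (2*j+3) := by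
      rw [show 2*j+4 = (2*j+2)+2 from by ring, Nat.fib_add_two, show (2*j+2)+1 = 2*j+3 from by ring]
    have hB : 10 * B (j+1+1) = (2*(j+1)+2) * fib (2*(j+1)+1) + (6*(j+1)+8) * fib (2*(j+1)+2) := by
      rw [recB (j+1), Nat.mul_add, Nat.mul_add, ihA, ihB]
      have e1 : 2*(j+1)+2 = 2*j+4 := by ring
      have e2 : 2*(j+1)+1 = 2*j+3 := by ring
      rw [e1, e2, hf4, hf3, hf2]
      ring
    refine ⟨?_, hB⟩
    rw [recA (j+1), Nat.mul_add, hB, ihA]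
    have e1 : 2*(j+1)+2 = 2*j+4 := by ring
    have e2 : 2*(j+1)+1 = 2*j+3 := by ring
    have e3 : 2*(j+1) = 2*j+2 := by ring
    rw [e1, e2, e3, hf4, hf3, hf2]
    ring

theorem hosoya_pattern1 (n : ℕ) (hn : 3 ≤ n) (hodd : Odd n) :
    10 * ∑ k ∈ Finset.Icc 1 ((n - 1) / 2), Nat.fib (2 * k) * Nat.fib (n - 2 * k + 1) =
      (4 * n - 8) * Nat.fib (n - 3) + (7 * n - 11) * Nat.fib (n - 2) := by
  obtain ⟨m, rfl⟩ := hodd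
  have hm : 1 ≤ m := by omega
  obtain ⟨j, rfl⟩ : ∃ j, m = j + 1 := ⟨m - 1, by omega⟩
  have hdiv : (2*(j+1)+1 - 1) / 2 = j + 1 := by omega
  have hsum : ∑ k ∈ Finset.Icc 1 ((2*(j+1)+1 - 1) / 2), fib (2 * k) * fib (2*(j+1)+1 - 2 * k + 1)
      = A (j+1) := by
    rw [hdiv]
    unfold A
    apply Finset.sum_congr rfl
    intro k hk
    obtain ⟨h1', h2'⟩ := Finset.mem_Icc.mp hk
    congr 2
    omega
  rw [hsum, (key j).1]
  have e1 : 2*(j+1)+1-3 = 2*j := by omega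
  have e2 : 2*(j+1)+1-2 = 2*j+1 := by omega
  have e3 : 4*(2*(j+1)+1)-8 = 8*j+4 := by omega
  have e4 : 7*(2*(j+1)+1)-11 = 14*j+10 := by omega
  rw [e1, e2, e3, e4]
end

section
/- Let F denote the Fibonacci sequence with F_1 = F_2 = 1. For every odd integer n ≥ 1, 2 · ( ∑_{k=1}^{(n-1)/2} F_{2k} · F_{n-2k+1} + ∑_{k=1}^{(n+1)/2} F_{2k} · F_{n-2k+3} ) = (n+1) · F_{n+2} - 2 · F_{n+1}. -/
lemma fibstep (j : ℕ) :
    Nat.fib (2 * j + 4) = 2 * Nat.fib (2 * j + 2) + Nat.fib (2 * j + 1) ∧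
    Nat.fib (2 * j + 3) = Nat.fib (2 * j + 2) + Nat.fib (2 * j + 1) := by
  have h1 := Nat.fib_add_two (n := 2 * j + 2)
  have h2 := Nat.fib_add_two (n := 2 * j + 1)
  ring_nf at h1 h2 ⊢
  omega

lemma hosoya_key (m : ℕ) :
    5 * (∑ k ∈ Finset.Icc 1 m,
        (Nat.fib (2 * k) : ℤ) * (Nat.fib (2 * (m - k) + 2) : ℤ)) =
      ((m : ℤ) - 2) * (Nat.fib (2 * m) : ℤ) + 3 * m * (Nat.fib (2 * m + 1) : ℤ) ∧
    5 * (∑ k ∈ Finset.Icc 1 m,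
        (Nat.fib (2 * k) : ℤ) * (Nat.fib (2 * (m - k) + 1) : ℤ)) =
      (2 * (m : ℤ) + 1) * (Nat.fib (2 * m) : ℤ) + m * (Nat.fib (2 * m + 1) : ℤ) := by
  induction m with
  | zero => simp
  | succ m ih =>
    obtain ⟨hA, hB⟩ := ih
    have e1 : ∑ k ∈ Finset.Icc 1 (m + 1),
        (Nat.fib (2 * k) : ℤ) * (Nat.fib (2 * (m + 1 - k) + 2) : ℤ)
        = (∑ k ∈ Finset.Icc 1 m,
            (2 * ((Nat.fib (2 * k) : ℤ) * (Nat.fib (2 * (m - k) + 2) : ℤ))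
              + (Nat.fib (2 * k) : ℤ) * (Nat.fib (2 * (m - k) + 1) : ℤ)))
          + (Nat.fib (2 * m + 2) : ℤ) := by
      rw [Finset.sum_Icc_succ_top (by omega)]
      congr 1
      · apply Finset.sum_congr rfl
        intro k hk
        simp only [Finset.mem_Icc] at hk
        rw [show 2 * (m + 1 - k) + 2 = 2 * (m - k) + 4 from by omega,
          (fibstep (m - k)).1]
        push_cast
        ring
      · rw [show 2 * (m + 1 - (m + 1)) + 2 = 2 from by omega,
          show 2 * (m + 1) = 2 * m + 2 from by ring]
        simp
    have e2 : ∑ k ∈ Finset.Icc 1 (m + 1),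
        (Nat.fib (2 * k) : ℤ) * (Nat.fib (2 * (m + 1 - k) + 1) : ℤ)
        = (∑ k ∈ Finset.Icc 1 m,
            ((Nat.fib (2 * k) : ℤ) * (Nat.fib (2 * (m - k) + 2) : ℤ)
              + (Nat.fib (2 * k) : ℤ) * (Nat.fib (2 * (m - k) + 1) : ℤ)))
          + (Nat.fib (2 * m + 2) : ℤ) := by
      rw [Finset.sum_Icc_succ_top (by omega)]
      congr 1
      · apply Finset.sum_congr rfl
        intro k hk
        simp only [Finset.mem_Icc] at hk
        rw [show 2 * (m + 1 - k) + 1 = 2 * (m - k) + 3 from by omega,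
          (fibstep (m - k)).2]
        push_cast
        ring
      · rw [show 2 * (m + 1 - (m + 1)) + 1 = 1 from by omega,
          show 2 * (m + 1) = 2 * m + 2 from by ring]
        simp
    have h1 : (Nat.fib (2 * m + 2) : ℤ) = Nat.fib (2 * m) + Nat.fib (2 * m + 1) := by
      rw [Nat.fib_add_two]; push_cast; ring
    have h2 : (Nat.fib (2 * m + 2 + 1) : ℤ) = Nat.fib (2 * m + 1) + Nat.fib (2 * m + 2) := by
      rw [show 2 * m + 2 + 1 = 2 * m + 1 + 2 from by omega, Nat.fib_add_two,
        show 2 * m + 1 + 1 = 2 * m + 2 from by omega]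
      push_cast; ring
    rw [e1, e2, show 2 * (m + 1) = 2 * m + 2 from by ring]
    constructor
    · rw [Finset.sum_add_distrib, ← Finset.mul_sum]
      push_cast
      linear_combination 2 * hA + hB + (3 - 4 * (m : ℤ)) * h1 - (3 * (m : ℤ) + 3) * h2
    · rw [Finset.sum_add_distrib]
      push_cast
      linear_combination hA + hB + (1 - 3 * (m : ℤ)) * h1 - ((m : ℤ) + 1) * h2

theorem hosoya_pattern2 (n : ℕ) (hn : 1 ≤ n) (hodd : Odd n) :
    (2 : ℤ) * ((∑ k ∈ Finset.Icc 1 ((n - 1) / 2),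
          (Nat.fib (2 * k) : ℤ) * (Nat.fib (n - 2 * k + 1) : ℤ)) +
        (∑ k ∈ Finset.Icc 1 ((n + 1) / 2),
          (Nat.fib (2 * k) : ℤ) * (Nat.fib (n + 3 - 2 * k) : ℤ))) =
      (n + 1 : ℤ) * (Nat.fib (n + 2) : ℤ) - 2 * (Nat.fib (n + 1) : ℤ) := by
  obtain ⟨m, rfl⟩ : ∃ m, n = 2 * m + 1 := by
    obtain ⟨m, hm⟩ := hodd; exact ⟨m, by omega⟩
  have d1 : (2 * m + 1 - 1) / 2 = m := by omega
  have d2 : (2 * m + 1 + 1) / 2 = m + 1 := by omega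
  rw [d1, d2]
  have s1 : ∑ k ∈ Finset.Icc 1 m,
      (Nat.fib (2 * k) : ℤ) * (Nat.fib (2 * m + 1 - 2 * k + 1) : ℤ)
      = ∑ k ∈ Finset.Icc 1 m,
        (Nat.fib (2 * k) : ℤ) * (Nat.fib (2 * (m - k) + 2) : ℤ) := by
    apply Finset.sum_congr rfl
    intro k hk
    simp only [Finset.mem_Icc] at hk
    rw [show 2 * m + 1 - 2 * k + 1 = 2 * (m - k) + 2 from by omega]
  have s2 : ∑ k ∈ Finset.Icc 1 (m + 1),
      (Nat.fib (2 * k) : ℤ) * (Nat.fib (2 * m + 1 + 3 - 2 * k) : ℤ)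
      = ∑ k ∈ Finset.Icc 1 (m + 1),
        (Nat.fib (2 * k) : ℤ) * (Nat.fib (2 * (m + 1 - k) + 2) : ℤ) := by
    apply Finset.sum_congr rfl
    intro k hk
    simp only [Finset.mem_Icc] at hk
    rw [show 2 * m + 1 + 3 - 2 * k = 2 * (m + 1 - k) + 2 from by omega]
  rw [s1, s2, show 2 * m + 1 + 2 = 2 * m + 2 + 1 from by omega,
    show 2 * m + 1 + 1 = 2 * m + 2 from by omega]
  have hA := (hosoya_key m).1
  have hA' := (hosoya_key (m + 1)).1
  rw [show 2 * (m + 1) = 2 * m + 2 from by ring] at hA'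
  have h1 : (Nat.fib (2 * m + 2) : ℤ) = Nat.fib (2 * m) + Nat.fib (2 * m + 1) := by
    rw [Nat.fib_add_two]; push_cast; ring
  have h2 : (Nat.fib (2 * m + 2 + 1) : ℤ) = Nat.fib (2 * m + 1) + Nat.fib (2 * m + 2) := by
    rw [show 2 * m + 2 + 1 = 2 * m + 1 + 2 from by omega, Nat.fib_add_two,
      show 2 * m + 1 + 1 = 2 * m + 2 from by omega]
    push_cast; ring
  apply mul_left_cancel₀ (show (5 : ℤ) ≠ 0 by norm_num)
  push_cast
  push_cast at hA hA'
  linear_combination 2 * hA + 2 * hA' + (4 - 2 * (m : ℤ)) * h1 - (4 * (m : ℤ) + 4) * h2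
end

section
/- Let F denote the Fibonacci sequence with F_0 = 0 and F_1 = F_2 = 1. For every integer m ≥ 1, ∑_{k=1}^{m} F_{2k} · F_{2m-2k+2} + m · F_{2m-1} = 2 · ∑_{j=0}^{2m} F_j · F_{2m-j}. -/
private def Tsum (m : ℕ) : ℕ := ∑ k ∈ Finset.Icc 1 m, Nat.fib (2 * m - 2 * k + 2) * Nat.fib (2 * k)

private def Usum (m : ℕ) : ℕ := ∑ k ∈ Finset.Icc 1 m, Nat.fib (2 * m - 2 * k + 3) * Nat.fib (2 * k)

private def Ssum (n : ℕ) : ℕ := ∑ j ∈ Finset.range (n + 1), Nat.fib j * Nat.fib (n - j)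

private lemma Tsum_succ (m : ℕ) :
    Tsum (m + 1) = Tsum m + Usum m + Nat.fib (2 * m + 2) := by
  unfold Tsum Usum
  rw [Finset.sum_Icc_succ_top (by omega : (1:ℕ) ≤ m + 1)]
  have htop : 2 * (m + 1) - 2 * (m + 1) + 2 = 2 := by omega
  have hcong : ∀ k ∈ Finset.Icc 1 m,
      Nat.fib (2 * (m + 1) - 2 * k + 2) * Nat.fib (2 * k)
        = Nat.fib (2 * m - 2 * k + 2) * Nat.fib (2 * k)
          + Nat.fib (2 * m - 2 * k + 3) * Nat.fib (2 * k) := by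
    intro k hk
    simp only [Finset.mem_Icc] at hk
    have h1 : 2 * (m + 1) - 2 * k + 2 = (2 * m - 2 * k + 2) + 2 := by omega
    have h2 : 2 * m - 2 * k + 2 + 1 = 2 * m - 2 * k + 3 := by omega
    rw [h1, Nat.fib_add_two, h2, Nat.add_mul]
  rw [Finset.sum_congr rfl hcong, Finset.sum_add_distrib, htop,
    show 2 * (m + 1) = 2 * m + 2 by ring]
  simp [Nat.fib_two]

private lemma Usum_succ (m : ℕ) :
    Usum (m + 1) = Tsum m + 2 * Usum m + 2 * Nat.fib (2 * m + 2) := by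
  unfold Tsum Usum
  rw [Finset.sum_Icc_succ_top (by omega : (1:ℕ) ≤ m + 1)]
  have htop : 2 * (m + 1) - 2 * (m + 1) + 3 = 3 := by omega
  have hcong : ∀ k ∈ Finset.Icc 1 m,
      Nat.fib (2 * (m + 1) - 2 * k + 3) * Nat.fib (2 * k)
        = (Nat.fib (2 * m - 2 * k + 2) * Nat.fib (2 * k)
            + Nat.fib (2 * m - 2 * k + 3) * Nat.fib (2 * k))
          + Nat.fib (2 * m - 2 * k + 3) * Nat.fib (2 * k) := by
    intro k hk
    simp only [Finset.mem_Icc] at hk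
    have h1 : 2 * (m + 1) - 2 * k + 3 = (2 * m - 2 * k + 3) + 2 := by omega
    rw [h1]
    generalize 2 * m - 2 * k = x
    simp [Nat.fib_add_two]
    ring
  rw [Finset.sum_congr rfl hcong, Finset.sum_add_distrib, Finset.sum_add_distrib, htop,
    show 2 * (m + 1) = 2 * m + 2 by ring, show Nat.fib 3 = 2 by decide]
  omega

private lemma TU_closed (m : ℕ) :
    5 * Tsum (m + 1) = (4 * m + 2) * Nat.fib (2 * m + 2) + (3 * m + 3) * Nat.fib (2 * m + 1)
    ∧ 5 * Usum (m + 1) = (4 * m + 4) * Nat.fib (2 * m + 3) + (3 * m + 2) * Nat.fib (2 * m + 2) := by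
  induction m with
  | zero => constructor <;> decide
  | succ n ih =>
      obtain ⟨iht, ihu⟩ := ih
      have ht := Tsum_succ (n + 1)
      have hu := Usum_succ (n + 1)
      have f1 : Nat.fib (2 * (n + 1) + 2) = Nat.fib (2 * n + 2) + Nat.fib (2 * n + 3) := by
        rw [show 2 * (n + 1) + 2 = (2 * n + 2) + 2 by ring, Nat.fib_add_two]
      have f2 : Nat.fib (2 * (n + 1) + 1) = Nat.fib (2 * n + 1) + Nat.fib (2 * n + 2) := by
        rw [show 2 * (n + 1) + 1 = (2 * n + 1) + 2 by ring, Nat.fib_add_two]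
      have f3 : Nat.fib (2 * n + 3) = Nat.fib (2 * n + 1) + Nat.fib (2 * n + 2) := by
        rw [show 2 * n + 3 = (2 * n + 1) + 2 by ring, Nat.fib_add_two]
      have f4 : Nat.fib (2 * (n + 1) + 3) = Nat.fib (2 * n + 3) + Nat.fib (2 * n + 4) := by
        rw [show 2 * (n + 1) + 3 = (2 * n + 3) + 2 by ring, Nat.fib_add_two]
      have f5 : Nat.fib (2 * n + 4) = Nat.fib (2 * n + 2) + Nat.fib (2 * n + 3) := by
        rw [show 2 * n + 4 = (2 * n + 2) + 2 by ring, Nat.fib_add_two]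
      constructor
      · rw [ht, Nat.mul_add, Nat.mul_add, iht, ihu, f1, f2, f3]
        ring
      · rw [hu, Nat.mul_add, Nat.mul_add, iht, Nat.mul_left_comm, ihu, f1, f4, f5, f3]
        ring

private lemma Ssum_rec (n : ℕ) :
    Ssum (n + 2) = Ssum (n + 1) + Ssum n + Nat.fib (n + 1) := by
  unfold Ssum
  rw [Finset.sum_range_succ, Finset.sum_range_succ]
  have h1 : n + 2 - (n + 1) = 1 := by omega
  have h2 : n + 2 - (n + 2) = 0 := by omega
  rw [h1, h2]
  have hcong : ∀ j ∈ Finset.range (n + 1),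
      Nat.fib j * Nat.fib (n + 2 - j)
        = Nat.fib j * Nat.fib (n - j) + Nat.fib j * Nat.fib (n + 1 - j) := by
    intro j hj
    simp only [Finset.mem_range] at hj
    have h3 : n + 2 - j = (n - j) + 2 := by omega
    have h4 : n + 1 - j = (n - j) + 1 := by omega
    rw [h3, Nat.fib_add_two, h4, Nat.mul_add]
  rw [Finset.sum_congr rfl hcong, Finset.sum_add_distrib]
  have hS1 : (∑ j ∈ Finset.range (n + 2), Nat.fib j * Nat.fib (n + 1 - j))
      = ∑ j ∈ Finset.range (n + 1), Nat.fib j * Nat.fib (n + 1 - j) := by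
    rw [Finset.sum_range_succ]
    simp
  rw [hS1, Nat.fib_one]
  simp only [Nat.fib_zero, Nat.mul_zero, Nat.mul_one, Nat.add_zero]
  omega

private lemma Ssum_closed (n : ℕ) :
    5 * Ssum (n + 1) = n * Nat.fib (n + 1) + (2 * n + 2) * Nat.fib n
    ∧ 5 * Ssum (n + 2) = (n + 1) * Nat.fib (n + 2) + (2 * n + 4) * Nat.fib (n + 1) := by
  induction n with
  | zero => constructor <;> decide
  | succ n ih =>
      obtain ⟨ih1, ih2⟩ := ih
      refine ⟨ih2, ?_⟩
      have hr := Ssum_rec (n + 1)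
      rw [show n + 1 + 2 = n + 3 by ring] at hr
      rw [show n + 1 + 2 = n + 3 by ring, hr, Nat.mul_add, Nat.mul_add, ih2, ih1]
      have f1 : Nat.fib (n + 1 + 2) = Nat.fib (n + 1) + Nat.fib (n + 1 + 1) := Nat.fib_add_two
      have f2 : Nat.fib (n + 2) = Nat.fib n + Nat.fib (n + 1) := Nat.fib_add_two
      rw [show n + 3 = n + 1 + 2 by ring, f1, show n + 1 + 1 = n + 2 by ring, f2]
      ring

theorem josef_triangle_pattern1 (m : ℕ) (hm : 1 ≤ m) :
    (∑ k ∈ Finset.Icc 1 m, Nat.fib (2 * k) * Nat.fib (2 * m - 2 * k + 2)) +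
        m * Nat.fib (2 * m - 1) =
      2 * ∑ j ∈ Finset.range (2 * m + 1), Nat.fib j * Nat.fib (2 * m - j) := by
  obtain ⟨n, rfl⟩ : ∃ n, m = n + 1 := ⟨m - 1, by omega⟩
  have hT : (∑ k ∈ Finset.Icc 1 (n + 1),
      Nat.fib (2 * k) * Nat.fib (2 * (n + 1) - 2 * k + 2)) = Tsum (n + 1) := by
    unfold Tsum
    exact Finset.sum_congr rfl fun k _ => Nat.mul_comm _ _
  have hS : (∑ j ∈ Finset.range (2 * (n + 1) + 1), Nat.fib j * Nat.fib (2 * (n + 1) - j))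
      = Ssum (2 * n + 2) := by
    unfold Ssum
    rw [show 2 * (n + 1) + 1 = (2 * n + 2) + 1 by ring]
    exact Finset.sum_congr rfl fun j _ => by rw [show 2 * (n + 1) = 2 * n + 2 by ring]
  have hm1 : 2 * (n + 1) - 1 = 2 * n + 1 := by omega
  rw [hT, hS, hm1]
  have h5 : (0:ℕ) < 5 := by norm_num
  apply Nat.eq_of_mul_eq_mul_left h5
  rw [Nat.mul_add, (TU_closed n).1]
  have hSc := (Ssum_closed (2 * n + 1)).1
  rw [show 2 * n + 1 + 1 = 2 * n + 2 by ring] at hSc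
  rw [Nat.mul_left_comm 5 2, hSc]
  ring
end
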